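/- arXiv:2203.08647 — 3 statements merged into one kernel-verified Lean document; each statement's English description precedes it below -/
import Mathlib

section
/- For all integers n ≥ 2 and all x ∈ {0,1,...,n}, the function f₂(x) = 1 − 2(2n−1)x/n² + 2(2n−1)x(x−1)/(n²(n−1)) satisfies 1 − (2n−1)/(2n−2) ≤ f₂(x) ≤ 1. -/
/-- The second dual Hahn eigenfunction of the (n,k)-Bernoulli–Laplace chain. -/
noncomputable def f2 (n : ℕ) (x : ℝ) : ℝ :=
  1 - 2 * (2 * (n : ℝ) - 1) * x / (n : ℝ) ^ 2
    + 2 * (2 * (n : ℝ) - 1) * x * (x - 1) / ((n : ℝ) ^ 2 * ((n : ℝ) - 1))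

theorem f2_bounds (n : ℕ) (hn : 2 ≤ n) (x : ℕ) (hx : x ≤ n) :
    1 - (2 * (n : ℝ) - 1) / (2 * (n : ℝ) - 2) ≤ f2 n x ∧ f2 n x ≤ 1 := by
  have hN : (2 : ℝ) ≤ (n : ℝ) := by exact_mod_cast hn
  have hy0 : (0 : ℝ) ≤ (x : ℝ) := Nat.cast_nonneg x
  have hyn : (x : ℝ) ≤ (n : ℝ) := by exact_mod_cast hx
  have h1 : (0 : ℝ) < (n : ℝ) ^ 2 := by positivity
  have h2 : (0 : ℝ) < (n : ℝ) - 1 := by linarith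
  have h3 : (0 : ℝ) < 2 * (n : ℝ) - 2 := by linarith
  have hn0 : ((n : ℝ)) ≠ 0 := by positivity
  have key : f2 n x = 1 + 2 * (2*(n:ℝ)-1) * x * ((x:ℝ) - n) / ((n:ℝ)^2 * ((n:ℝ)-1)) := by
    unfold f2
    field_simp
    ring
  rw [key]
  have hd : (0:ℝ) < (n:ℝ)^2 * ((n:ℝ)-1) := by positivity
  have ht0 : 2 * (2*(n:ℝ)-1) * x * ((x:ℝ) - n) / ((n:ℝ)^2 * ((n:ℝ)-1)) ≤ 0 := by
    apply div_nonpos_of_nonpos_of_nonneg _ hd.le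
    nlinarith [mul_nonneg hy0 (sub_nonneg.2 hyn)]
  have ht1 : -((2 * (n:ℝ) - 1) / (2 * (n:ℝ) - 2)) ≤ 2 * (2*(n:ℝ)-1) * x * ((x:ℝ) - n) / ((n:ℝ)^2 * ((n:ℝ)-1)) := by
    rw [← neg_div, div_le_div_iff₀ h3 hd]
    nlinarith [mul_nonneg (mul_nonneg (by linarith : (0:ℝ) ≤ 2*(n:ℝ)-1) h2.le) (sq_nonneg (2*(x:ℝ) - n))]
  constructor <;> linarith
end

section
/- Let (X_t) and (Y_t) be two copies of the (n,k)-Bernoulli–Laplace chain coupled via the label-matching coupling, and for r > 0 let τ_couple(r) = min{t : |X_t − Y_t| ≤ r}. Then for every t ∈ ℕ, P(τ_couple(r) > t) ≤ (1 − 2k(n−k)/n²)^t · |X₀ − Y₀| / r. -/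
/-- The new number of red balls in a left urn under the label-matching coupling:
red balls in the left urn receive labels `0,…,x-1` (out of `0,…,n-1`) and red balls in
the right urn receive labels `0,…,n-x-1` (out of `0,…,n-1`); the balls with labels in
`A` leave the left urn and the balls with labels in `B` enter it. -/
def nextState (n x : ℕ) (A B : Finset ℕ) : ℕ :=
  x - (A ∩ Finset.range x).card + (B ∩ Finset.range (n - x)).card

/-- Transition probability of the coupled pair of (n,k)-Bernoulli–Laplace chains:
the label sets `A` and `B` are independent uniform `k`-subsets of `{0,…,n-1}`. -/
noncomputable def coupleTrans (n k x y x' y' : ℕ) : ℝ :=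
  ((((Finset.range n).powersetCard k ×ˢ (Finset.range n).powersetCard k).filter
      (fun AB => nextState n x AB.1 AB.2 = x' ∧ nextState n y AB.1 AB.2 = y')).card : ℝ)
    / (((Finset.range n).powersetCard k).card : ℝ) ^ 2

/-- `surv n k r t (x, y)` is the probability, for the coupled pair started at `(x, y)`,
that `|X_s - Y_s| > r` for all `s = 0, 1, …, t`; that is, `P(τ_couple(r) > t)`. -/
noncomputable def surv (n k : ℕ) (r : ℝ) : ℕ → ℕ × ℕ → ℝ
  | 0, (x, y) => if |(x : ℝ) - y| ≤ r then 0 else 1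
  | t + 1, (x, y) =>
      if |(x : ℝ) - y| ≤ r then 0
      else ∑ x' ∈ Finset.range (n + 1), ∑ y' ∈ Finset.range (n + 1),
        coupleTrans n k x y x' y' * surv n k r t (x', y')

open Finset

lemma card_inter_range_le (A : Finset ℕ) (x : ℕ) : (A ∩ Finset.range x).card ≤ x := by
  simpa using card_le_card (inter_subset_right (s₁ := A) (s₂ := Finset.range x))

lemma nextState_le {n x : ℕ} (hx : x ≤ n) (A B : Finset ℕ) : nextState n x A B ≤ n := by
  have h1 : x - (A ∩ Finset.range x).card ≤ x := Nat.sub_le _ _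
  have h2 := card_inter_range_le B (n - x)
  unfold nextState; omega

lemma nextState_cast (n x : ℕ) (A B : Finset ℕ) :
    (nextState n x A B : ℝ) =
      (x : ℝ) - (A ∩ Finset.range x).card + (B ∩ Finset.range (n - x)).card := by
  unfold nextState
  push_cast [Nat.cast_sub (card_inter_range_le A x)]
  ring

lemma fiber_sum (n k x y : ℕ) (hx : x ≤ n) (hy : y ≤ n) (g : ℕ → ℕ → ℝ) :
    ∑ x' ∈ Finset.range (n+1), ∑ y' ∈ Finset.range (n+1),
      ((((Finset.range n).powersetCard k ×ˢ (Finset.range n).powersetCard k).filter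
        (fun AB => nextState n x AB.1 AB.2 = x' ∧ nextState n y AB.1 AB.2 = y')).card : ℝ)
        * g x' y'
    = ∑ AB ∈ ((Finset.range n).powersetCard k ×ˢ (Finset.range n).powersetCard k),
        g (nextState n x AB.1 AB.2) (nextState n y AB.1 AB.2) := by
  classical
  have h := Finset.sum_fiberwise_of_maps_to'
    (s := (Finset.range n).powersetCard k ×ˢ (Finset.range n).powersetCard k)
    (t := Finset.range (n+1) ×ˢ Finset.range (n+1))
    (g := fun AB => (nextState n x AB.1 AB.2, nextState n y AB.1 AB.2))
    (fun AB _ => by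
      simp only [mem_product, mem_range, Nat.lt_succ_iff]
      exact ⟨nextState_le hx _ _, nextState_le hy _ _⟩)
    (fun p => g p.1 p.2)
  rw [← Finset.sum_product'] at *
  rw [← h]
  refine Finset.sum_congr rfl fun p _ => ?_
  rw [Finset.sum_const, nsmul_eq_mul]
  have hfil : ((Finset.range n).powersetCard k ×ˢ (Finset.range n).powersetCard k).filter
        (fun AB => nextState n x AB.1 AB.2 = p.1 ∧ nextState n y AB.1 AB.2 = p.2)
      = ((Finset.range n).powersetCard k ×ˢ (Finset.range n).powersetCard k).filter
        (fun AB => (nextState n x AB.1 AB.2, nextState n y AB.1 AB.2) = p) := by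
    ext AB
    simp [Finset.mem_filter, Prod.ext_iff]
  rw [hfil]

lemma inter_range_succ_card (A : Finset ℕ) (i : ℕ) :
    (A ∩ Finset.range (i+1)).card = (A ∩ Finset.range i).card + (if i ∈ A then 1 else 0) := by
  classical
  by_cases h : i ∈ A
  · rw [if_pos h, Finset.range_add_one, Finset.inter_comm, Finset.insert_inter_of_mem h,
      Finset.card_insert_of_notMem (by simp), Finset.inter_comm]
  · rw [if_neg h, Finset.range_add_one, Finset.inter_comm, Finset.insert_inter_of_notMem h,
      Finset.inter_comm, Nat.add_zero]

lemma count_mem_powersetCard (n k i : ℕ) (hi : i < n) :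
    n * (((Finset.range n).powersetCard k).filter (fun A => i ∈ A)).card
      = k * ((Finset.range n).powersetCard k).card := by
  classical
  rcases Nat.eq_zero_or_pos k with rfl | hk
  · have h0 : (((Finset.range n).powersetCard 0).filter (fun A => i ∈ A)) = ∅ := by
      ext A
      simp only [Finset.mem_filter, Finset.mem_powersetCard, Finset.card_eq_zero,
        Finset.notMem_empty, iff_false, not_and]
      rintro ⟨-, rfl⟩
      exact Finset.notMem_empty i
    rw [h0, Finset.card_empty, Nat.mul_zero, Nat.zero_mul]
  · obtain ⟨j, rfl⟩ : ∃ j, k = j + 1 := ⟨k - 1, (Nat.succ_pred_eq_of_pos hk).symm⟩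
    have hcard : (((Finset.range n).powersetCard (j+1)).filter (fun A => i ∈ A)).card
        = (((Finset.range n).erase i).powersetCard j).card := by
      apply Finset.card_bij (fun A _ => A.erase i)
      · rintro A hA
        simp only [Finset.mem_filter, Finset.mem_powersetCard] at hA
        obtain ⟨⟨hsub, hcA⟩, hiA⟩ := hA
        simp only [Finset.mem_powersetCard]
        constructor
        · intro a ha
          simp only [Finset.mem_erase] at ha ⊢
          exact ⟨ha.1, hsub ha.2⟩
        · rw [Finset.card_erase_of_mem hiA, hcA]
          omega
      · rintro A hA A' hA' hE
        simp only [Finset.mem_filter, Finset.mem_powersetCard] at hA hA'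
        rw [← Finset.insert_erase hA.2, ← Finset.insert_erase hA'.2, hE]
      · rintro C hC
        simp only [Finset.mem_powersetCard] at hC
        refine ⟨insert i C, ?_, ?_⟩
        · simp only [Finset.mem_filter, Finset.mem_powersetCard]
          have hiC : i ∉ C := fun h => (Finset.mem_erase.1 (hC.1 h)).1 rfl
          refine ⟨⟨?_, by rw [Finset.card_insert_of_notMem hiC, hC.2]⟩, Finset.mem_insert_self _ _⟩
          intro a ha
          rcases Finset.mem_insert.1 ha with rfl | ha
          · exact Finset.mem_range.2 hi
          · exact Finset.mem_of_mem_erase (hC.1 ha)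
        · have hiC : i ∉ C := fun h => (Finset.mem_erase.1 (hC.1 h)).1 rfl
          rw [Finset.erase_insert hiC]
    rw [hcard, Finset.card_powersetCard, Finset.card_powersetCard,
      Finset.card_erase_of_mem (Finset.mem_range.2 hi), Finset.card_range]
    have h1 := Nat.add_one_mul_choose_eq (n - 1) j
    have hn1 : n - 1 + 1 = n := by omega
    rw [hn1] at h1
    rw [h1, Nat.mul_comm]

lemma nextState_succ_sub (n i : ℕ) (hi : i < n) (A B : Finset ℕ) :
    (nextState n (i+1) A B : ℝ) - nextState n i A B
      = 1 - (if i ∈ A then (1:ℝ) else 0) - (if n - 1 - i ∈ B then (1:ℝ) else 0) := by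
  have e1 : n - i = (n - 1 - i) + 1 := by omega
  have e2 : n - (i+1) = n - 1 - i := by omega
  rw [nextState_cast, nextState_cast, e1, e2, inter_range_succ_card A i,
    inter_range_succ_card B (n - 1 - i)]
  push_cast [apply_ite (Nat.cast : ℕ → ℝ)]
  ring

lemma step_sum (n k i : ℕ) (hk : k ≤ n) (hi : i < n) :
    ∑ AB ∈ ((Finset.range n).powersetCard k ×ˢ (Finset.range n).powersetCard k),
      |(nextState n (i+1) AB.1 AB.2 : ℝ) - nextState n i AB.1 AB.2|
    = (((Finset.range n).powersetCard k).card : ℝ) ^ 2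
        * (1 - 2 * (k:ℝ) * ((n:ℝ) - k) / (n:ℝ) ^ 2) := by
  classical
  set P := (Finset.range n).powersetCard k with hP
  set N : ℝ := (P.card : ℝ) with hN
  set M : ℝ := ((P.filter (fun A => i ∈ A)).card : ℝ) with hM
  set M' : ℝ := ((P.filter (fun B => n - 1 - i ∈ B)).card : ℝ) with hM'
  have habs : ∀ AB : Finset ℕ × Finset ℕ,
      |(nextState n (i+1) AB.1 AB.2 : ℝ) - nextState n i AB.1 AB.2|
      = 1 - (if i ∈ AB.1 then (1:ℝ) else 0) - (if n - 1 - i ∈ AB.2 then (1:ℝ) else 0)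
        + 2 * (if i ∈ AB.1 then (1:ℝ) else 0) * (if n - 1 - i ∈ AB.2 then (1:ℝ) else 0) := by
    intro AB
    rw [nextState_succ_sub n i hi]
    split_ifs <;> norm_num
  rw [Finset.sum_congr rfl (fun AB _ => habs AB)]
  rw [Finset.sum_product]
  have hinner : ∀ A : Finset ℕ,
      ∑ B ∈ P, (1 - (if i ∈ A then (1:ℝ) else 0) - (if n - 1 - i ∈ B then (1:ℝ) else 0)
        + 2 * (if i ∈ A then (1:ℝ) else 0) * (if n - 1 - i ∈ B then (1:ℝ) else 0))
      = N - (if i ∈ A then (1:ℝ) else 0) * N - M' + 2 * (if i ∈ A then (1:ℝ) else 0) * M' := by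
    intro A
    rw [Finset.sum_add_distrib, Finset.sum_sub_distrib, Finset.sum_sub_distrib]
    have hb : ∑ B ∈ P, (if n - 1 - i ∈ B then (1:ℝ) else 0) = M' := by
      rw [Finset.sum_boole, hM']
    have hb2 : ∑ B ∈ P, 2 * (if i ∈ A then (1:ℝ) else 0) * (if n - 1 - i ∈ B then (1:ℝ) else 0)
        = 2 * (if i ∈ A then (1:ℝ) else 0) * M' := by
      rw [← Finset.mul_sum, hb]
    rw [hb, hb2, Finset.sum_const, Finset.sum_const, nsmul_eq_mul, nsmul_eq_mul, hN]
    ring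
  rw [Finset.sum_congr rfl (fun A _ => hinner A)]
  have houter : ∑ A ∈ P, (N - (if i ∈ A then (1:ℝ) else 0) * N - M'
        + 2 * (if i ∈ A then (1:ℝ) else 0) * M')
      = N * N - M * N - M' * N + 2 * M * M' := by
    rw [Finset.sum_add_distrib, Finset.sum_sub_distrib, Finset.sum_sub_distrib]
    have ha : ∑ A ∈ P, (if i ∈ A then (1:ℝ) else 0) = M := by
      rw [Finset.sum_boole, hM]
    have ha1 : ∑ A ∈ P, (if i ∈ A then (1:ℝ) else 0) * N = M * N := by
      rw [← Finset.sum_mul, ha]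
    have ha2 : ∑ A ∈ P, 2 * (if i ∈ A then (1:ℝ) else 0) * M' = 2 * M * M' := by
      have : ∀ A : Finset ℕ, 2 * (if i ∈ A then (1:ℝ) else 0) * M'
          = (if i ∈ A then (1:ℝ) else 0) * (2 * M') := fun A => by ring
      rw [Finset.sum_congr rfl (fun A _ => this A), ← Finset.sum_mul, ha]
      ring
    rw [ha1, ha2, Finset.sum_const, Finset.sum_const, nsmul_eq_mul, nsmul_eq_mul, hN]
    ring
  rw [houter]
  -- counting identities
  have hMn : (n : ℝ) * M = (k : ℝ) * N := by
    rw [hM, hN]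
    exact_mod_cast congrArg (Nat.cast : ℕ → ℝ) (count_mem_powersetCard n k i hi)
  have hM'n : (n : ℝ) * M' = (k : ℝ) * N := by
    rw [hM', hN]
    exact_mod_cast congrArg (Nat.cast : ℕ → ℝ)
      (count_mem_powersetCard n k (n - 1 - i) (by omega))
  have hn0 : (n : ℝ) ≠ 0 := Nat.cast_ne_zero.2 (by omega)
  have hMe : M = (k : ℝ) * N / n := by field_simp; linarith [hMn]
  have hM'e : M' = (k : ℝ) * N / n := by field_simp; linarith [hM'n]
  rw [hMe, hM'e]
  field_simp
  ring

lemma telescope_real (f : ℕ → ℝ) {x y : ℕ} (h : x ≤ y) :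
    f y - f x = ∑ i ∈ Finset.Ico x y, (f (i+1) - f i) := by
  induction y, h using Nat.le_induction with
  | base => simp
  | succ y hxy ih => rw [Finset.sum_Ico_succ_top hxy, ← ih]; ring

lemma contraction_le (n k : ℕ) (hk : k ≤ n) {x y : ℕ} (hxy : x ≤ y) (hy : y ≤ n) :
    ∑ AB ∈ ((Finset.range n).powersetCard k ×ˢ (Finset.range n).powersetCard k),
      |(nextState n x AB.1 AB.2 : ℝ) - nextState n y AB.1 AB.2|
    ≤ (((Finset.range n).powersetCard k).card : ℝ) ^ 2
        * (1 - 2 * (k:ℝ) * ((n:ℝ) - k) / (n:ℝ) ^ 2) * |(x:ℝ) - y| := by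
  classical
  set P := (Finset.range n).powersetCard k with hP
  have hstep : ∀ AB : Finset ℕ × Finset ℕ,
      |(nextState n x AB.1 AB.2 : ℝ) - nextState n y AB.1 AB.2|
      ≤ ∑ i ∈ Finset.Ico x y,
          |(nextState n (i+1) AB.1 AB.2 : ℝ) - nextState n i AB.1 AB.2| := by
    intro AB
    rw [abs_sub_comm]
    rw [telescope_real (fun i => (nextState n i AB.1 AB.2 : ℝ)) hxy]
    exact Finset.abs_sum_le_sum_abs _ _
  calc ∑ AB ∈ P ×ˢ P, |(nextState n x AB.1 AB.2 : ℝ) - nextState n y AB.1 AB.2|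
      ≤ ∑ AB ∈ P ×ˢ P, ∑ i ∈ Finset.Ico x y,
          |(nextState n (i+1) AB.1 AB.2 : ℝ) - nextState n i AB.1 AB.2| :=
        Finset.sum_le_sum (fun AB _ => hstep AB)
    _ = ∑ i ∈ Finset.Ico x y, ∑ AB ∈ P ×ˢ P,
          |(nextState n (i+1) AB.1 AB.2 : ℝ) - nextState n i AB.1 AB.2| := Finset.sum_comm
    _ = ∑ i ∈ Finset.Ico x y, ((P.card : ℝ) ^ 2 * (1 - 2 * (k:ℝ) * ((n:ℝ) - k) / (n:ℝ) ^ 2)) := by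
        refine Finset.sum_congr rfl fun i hi => ?_
        exact step_sum n k i hk (lt_of_lt_of_le (Finset.mem_Ico.1 hi).2 hy)
    _ = ((y : ℝ) - x) * ((P.card : ℝ) ^ 2 * (1 - 2 * (k:ℝ) * ((n:ℝ) - k) / (n:ℝ) ^ 2)) := by
        rw [Finset.sum_const, Nat.card_Ico, nsmul_eq_mul]
        congr 1
        exact Nat.cast_sub hxy
    _ = (P.card : ℝ) ^ 2 * (1 - 2 * (k:ℝ) * ((n:ℝ) - k) / (n:ℝ) ^ 2) * |(x:ℝ) - y| := by
        rw [abs_sub_comm, abs_of_nonneg (by simp [sub_nonneg]; exact_mod_cast hxy)]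
        ring

lemma contraction (n k : ℕ) (hk : k ≤ n) {x y : ℕ} (hx : x ≤ n) (hy : y ≤ n) :
    ∑ AB ∈ ((Finset.range n).powersetCard k ×ˢ (Finset.range n).powersetCard k),
      |(nextState n x AB.1 AB.2 : ℝ) - nextState n y AB.1 AB.2|
    ≤ (((Finset.range n).powersetCard k).card : ℝ) ^ 2
        * (1 - 2 * (k:ℝ) * ((n:ℝ) - k) / (n:ℝ) ^ 2) * |(x:ℝ) - y| := by
  rcases le_total x y with h | h
  · exact contraction_le n k hk h hy
  · have := contraction_le n k hk h hx
    calc ∑ AB ∈ ((Finset.range n).powersetCard k ×ˢ (Finset.range n).powersetCard k),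
        |(nextState n x AB.1 AB.2 : ℝ) - nextState n y AB.1 AB.2|
        = ∑ AB ∈ ((Finset.range n).powersetCard k ×ˢ (Finset.range n).powersetCard k),
          |(nextState n y AB.1 AB.2 : ℝ) - nextState n x AB.1 AB.2| := by
          exact Finset.sum_congr rfl fun AB _ => abs_sub_comm _ _
      _ ≤ _ := by rw [abs_sub_comm]; exact this

lemma rho_nonneg (n k : ℕ) (hn : 0 < n) (hk : k ≤ n) :
    0 ≤ 1 - 2 * (k : ℝ) * ((n : ℝ) - k) / (n : ℝ) ^ 2 := by
  have hn0 : (0:ℝ) < (n:ℝ) ^ 2 := by positivity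
  rw [sub_nonneg, div_le_one hn0]
  have hkn : (k : ℝ) ≤ n := by exact_mod_cast hk
  have hk0 : (0:ℝ) ≤ k := by positivity
  nlinarith [sq_nonneg ((n:ℝ) - 2 * k)]

/-- Path-coupling bound: `P(τ_couple(r) > t) ≤ (1 - 2k(n-k)/n²)^t |X₀ - Y₀| / r`. -/
theorem coupling_time_bound (n k : ℕ) (hn : 0 < n) (hk : k ≤ n) (r : ℝ) (hr : 0 < r)
    (x₀ y₀ : ℕ) (hx : x₀ ≤ n) (hy : y₀ ≤ n) (t : ℕ) :
    surv n k r t (x₀, y₀)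
      ≤ (1 - 2 * (k : ℝ) * ((n : ℝ) - k) / (n : ℝ) ^ 2) ^ t * |(x₀ : ℝ) - y₀| / r := by
  set ρ : ℝ := 1 - 2 * (k : ℝ) * ((n : ℝ) - k) / (n : ℝ) ^ 2 with hρ
  have hρ0 : 0 ≤ ρ := rho_nonneg n k hn hk
  induction t generalizing x₀ y₀ with
  | zero =>
    simp only [surv]
    split_ifs with h
    · positivity
    · rw [pow_zero, one_mul, le_div_iff₀ hr, one_mul]
      linarith [not_le.1 h]
  | succ t ih =>
    simp only [surv]
    split_ifs with h
    · positivity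
    · have hN : (0:ℝ) < (((Finset.range n).powersetCard k).card : ℝ) := by
        rw [Finset.card_powersetCard, Finset.card_range]
        exact_mod_cast Nat.choose_pos hk
      set N : ℝ := (((Finset.range n).powersetCard k).card : ℝ) with hNdef
      have htrans_nonneg : ∀ x' y', 0 ≤ coupleTrans n k x₀ y₀ x' y' := by
        intro x' y'
        unfold coupleTrans
        positivity
      calc ∑ x' ∈ Finset.range (n + 1), ∑ y' ∈ Finset.range (n + 1),
            coupleTrans n k x₀ y₀ x' y' * surv n k r t (x', y')
          ≤ ∑ x' ∈ Finset.range (n + 1), ∑ y' ∈ Finset.range (n + 1),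
            coupleTrans n k x₀ y₀ x' y' * (ρ ^ t * |(x':ℝ) - y'| / r) := by
            refine Finset.sum_le_sum fun x' hx' => Finset.sum_le_sum fun y' hy' => ?_
            exact mul_le_mul_of_nonneg_left
              (ih x' y' (Nat.lt_succ_iff.1 (Finset.mem_range.1 hx'))
                (Nat.lt_succ_iff.1 (Finset.mem_range.1 hy'))) (htrans_nonneg x' y')
        _ = (∑ AB ∈ ((Finset.range n).powersetCard k ×ˢ (Finset.range n).powersetCard k),
              ρ ^ t * |(nextState n x₀ AB.1 AB.2 : ℝ) - nextState n y₀ AB.1 AB.2| / r) / N ^ 2 := by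
            simp only [coupleTrans, div_mul_eq_mul_div, ← Finset.sum_div]
            rw [fiber_sum n k x₀ y₀ hx hy (fun x' y' => ρ ^ t * |(x':ℝ) - y'| / r),
              ← Finset.sum_div]
        _ ≤ ((ρ ^ t / r) * (N ^ 2 * ρ * |(x₀:ℝ) - y₀|)) / N ^ 2 := by
            gcongr ?_ / _
            have hrw : ∀ AB : Finset ℕ × Finset ℕ,
                ρ ^ t * |(nextState n x₀ AB.1 AB.2 : ℝ) - nextState n y₀ AB.1 AB.2| / r
                = (ρ ^ t / r) * |(nextState n x₀ AB.1 AB.2 : ℝ) - nextState n y₀ AB.1 AB.2| :=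
              fun _ => by ring
            rw [Finset.sum_congr rfl fun AB _ => hrw AB, ← Finset.mul_sum]
            exact mul_le_mul_of_nonneg_left (contraction n k hk hx hy) (by positivity)
        _ = ρ ^ (t+1) * |(x₀ : ℝ) - y₀| / r := by
            field_simp
            ring
end

section
/- Under the label-matching coupling of two copies (X_t), (Y_t) of the (n,k)-Bernoulli–Laplace chain, the distance |X_{t+1} − Y_{t+1}| ≤ |X_t − Y_t| holds almost surely for every t ≥ 0. -/
lemma inter_range_card_mono (A : Finset ℕ) {x y : ℕ} (h : x ≤ y) :
    (A ∩ Finset.range x).card ≤ (A ∩ Finset.range y).card :=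
  Finset.card_le_card (Finset.inter_subset_inter le_rfl (Finset.range_subset_range.mpr h))

lemma inter_range_card_le (A : Finset ℕ) {x y : ℕ} (h : x ≤ y) :
    (A ∩ Finset.range y).card ≤ (A ∩ Finset.range x).card + (y - x) := by
  have hsub : A ∩ Finset.range y ⊆ (A ∩ Finset.range x) ∪ (Finset.range y \ Finset.range x) := by
    intro a ha
    simp only [Finset.mem_inter, Finset.mem_range, Finset.mem_union, Finset.mem_sdiff] at ha ⊢
    by_cases hax : a < x <;> tauto
  calc (A ∩ Finset.range y).card
      ≤ ((A ∩ Finset.range x) ∪ (Finset.range y \ Finset.range x)).card :=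
        Finset.card_le_card hsub
    _ ≤ (A ∩ Finset.range x).card + (Finset.range y \ Finset.range x).card :=
        Finset.card_union_le _ _
    _ = (A ∩ Finset.range x).card + (y - x) := by
        rw [Finset.card_sdiff_of_subset (Finset.range_subset_range.mpr h), Finset.card_range, Finset.card_range]

lemma key (n x y : ℕ) (hy : y ≤ n) (hxy : x ≤ y) (A B : Finset ℕ) :
    |(nextState n x A B : ℤ) - (nextState n y A B : ℤ)| ≤ |(x : ℤ) - (y : ℤ)| := by
  have hax : (A ∩ Finset.range x).card ≤ x := by
    simpa using Finset.card_le_card (Finset.inter_subset_right (s₁ := A) (s₂ := Finset.range x))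
  have hay : (A ∩ Finset.range y).card ≤ y := by
    simpa using Finset.card_le_card (Finset.inter_subset_right (s₁ := A) (s₂ := Finset.range y))
  have h1 := inter_range_card_mono A hxy
  have h2 := inter_range_card_le A hxy
  have h3 := inter_range_card_mono B (Nat.sub_le_sub_left hxy n)
  have h4 := inter_range_card_le B (Nat.sub_le_sub_left hxy n)
  have hR : |(x : ℤ) - (y : ℤ)| = (y : ℤ) - (x : ℤ) := by
    rw [abs_sub_comm]; exact abs_of_nonneg (by push_cast; omega)
  unfold nextState
  rw [hR, abs_le]
  constructor <;> push_cast <;> omega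

/-- Under the label-matching coupling (the same label sets `A`, `B` are used for both
chains), the distance between the two coordinates is nonincreasing in one step. -/
theorem coupling_contracts (n k x y : ℕ) (hx : x ≤ n) (hy : y ≤ n)
    (A B : Finset ℕ) (hA : A ⊆ Finset.range n) (hB : B ⊆ Finset.range n)
    (hAcard : A.card = k) (hBcard : B.card = k) :
    |(nextState n x A B : ℤ) - (nextState n y A B : ℤ)| ≤ |(x : ℤ) - (y : ℤ)| := by
  rcases le_total x y with h | h
  · exact key n x y hy h A B
  · rw [abs_sub_comm, abs_sub_comm (x : ℤ)]
    exact key n y x hx h A B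
end
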